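/- Let f : Δ' → Δ be a function, R' a relation on Δ' and R a relation on Δ. Assume (i) if (p, q) ∈ R' then (f p, f q) ∈ R, and (ii) for every (d, e) ∈ R ∪ R⁻¹ and every p ∈ Δ' with f p = d, there exists q ∈ Δ' with (p, q) in the equivalence closure of R' and f q = e. Then for every (d, e) in the equivalence closure ρ of R and every p with f p = d, there is q ∈ Δ' with (p, q) in the equivalence closure ρ' of R' and f q = e. -/
import Mathlib


theorem eqvGen_lift {Δ' Δ : Type*} (f : Δ' → Δ)
    (R' : Δ' → Δ' → Prop) (R : Δ → Δ → Prop)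
    (h1 : ∀ p q, R' p q → R (f p) (f q))
    (h2 : ∀ d e, (R d e ∨ R e d) → ∀ p, f p = d →
      ∃ q, Relation.EqvGen R' p q ∧ f q = e) :
    ∀ d e, Relation.EqvGen R d e → ∀ p, f p = d →
      ∃ q, Relation.EqvGen R' p q ∧ f q = e := by
  intro d e h
  have key : (∀ p, f p = d → ∃ q, Relation.EqvGen R' p q ∧ f q = e) ∧
      (∀ p, f p = e → ∃ q, Relation.EqvGen R' p q ∧ f q = d) := by
    induction h with
    | rel a b hab =>
        exact ⟨h2 a b (Or.inl hab), h2 b a (Or.inr hab)⟩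
    | refl a =>
        exact ⟨fun p hp => ⟨p, Relation.EqvGen.refl p, hp⟩,
               fun p hp => ⟨p, Relation.EqvGen.refl p, hp⟩⟩
    | symm a b _ ih => exact ⟨ih.2, ih.1⟩
    | trans a b c _ _ ih1 ih2 =>
        constructor
        · intro p hp
          obtain ⟨q, hq, hfq⟩ := ih1.1 p hp
          obtain ⟨r, hr, hfr⟩ := ih2.1 q hfq
          exact ⟨r, hq.trans _ _ _ hr, hfr⟩
        · intro p hp
          obtain ⟨q, hq, hfq⟩ := ih2.2 p hp
          obtain ⟨r, hr, hfr⟩ := ih1.2 q hfq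
          exact ⟨r, hq.trans _ _ _ hr, hfr⟩
  exact key.1
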